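/- arXiv:1605.05487 — 7 statements merged into one kernel-verified Lean document; each statement's English description precedes it below -/
import Mathlib

section
/- Let ξ̃ be a non-negative random variable with mean μ > 0 and variance σ² > 0, and let γ satisfy μ ≤ γ < μ + σ²/μ. Then there is no distribution P supported on [0,∞) with mean μ and variance σ² satisfying P(ξ̃ ≥ γ) = μ/γ. -/
/-!
Equality in Markov's inequality `γ · P(ξ ≥ γ) ≤ E ξ` forces `ξ = γ · 1{ξ ≥ γ}` almost surely,
since the difference of the two sides is the integral of a non-negative function. Hence
`ξ² = γ ξ` a.s., so `E ξ² = γ μ` and the variance is `γ μ - μ²`; it equals `σ²` only for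
`γ = μ + σ²/μ`.
-/

open MeasureTheory ProbabilityTheory

section Markov

variable {α : Type*} [MeasurableSpace α] {P : Measure α} [IsFiniteMeasure P] {f : α → ℝ} {γ : ℝ}

theorem ae_eq_indicator_of_mul_measureReal_eq_integral (hf0 : 0 ≤ᵐ[P] f) (hfm : Measurable f)
    (hfi : Integrable f P) (heq : γ * P.real {x | γ ≤ f x} = ∫ x, f x ∂P) :
    f =ᵐ[P] {x | γ ≤ f x}.indicator fun _ => γ := by
  set A := {x | γ ≤ f x}
  have hA : MeasurableSet A := measurableSet_le measurable_const hfm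
  have hgap_nonneg : 0 ≤ᵐ[P] f - A.indicator fun _ => γ := by
    filter_upwards [hf0] with x hx
    by_cases hxA : x ∈ A
    · simpa [Set.indicator_of_mem hxA, A] using hxA
    · simpa [Set.indicator_of_notMem hxA] using hx
  have hgap_integral : ∫ x, (f - A.indicator fun _ => γ) x ∂P = 0 := by
    rw [Pi.sub_def, integral_sub hfi ((integrable_const γ).indicator hA),
      integral_indicator_const γ hA, smul_eq_mul, mul_comm, heq, sub_self]
  have hgap_zero := (integral_eq_zero_iff_of_nonneg_ae hgap_nonneg
    (hfi.sub ((integrable_const γ).indicator hA))).mp hgap_integral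
  filter_upwards [hgap_zero] with x hx
  exact sub_eq_zero.mp hx

theorem integral_sq_eq_mul_integral_of_mul_measureReal_eq_integral (hf0 : 0 ≤ᵐ[P] f)
    (hfm : Measurable f) (hfi : Integrable f P)
    (heq : γ * P.real {x | γ ≤ f x} = ∫ x, f x ∂P) :
    ∫ x, f x ^ 2 ∂P = γ * ∫ x, f x ∂P := by
  rw [← integral_const_mul]
  refine integral_congr_ae ?_
  filter_upwards [ae_eq_indicator_of_mul_measureReal_eq_integral hf0 hfm hfi heq] with x hx
  rw [hx]
  by_cases hxA : γ ≤ f x <;> simp [Set.indicator, hxA, sq]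

end Markov

theorem stmt_1_general (μ σ γ : ℝ) (hμ : 0 < μ)
    (hγ1 : μ ≤ γ) (hγ2 : γ < μ + σ^2 / μ)
    (P : Measure ℝ) (hP : IsProbabilityMeasure P)
    (hsupp : P {x | x < 0} = 0)
    (hint1 : Integrable (fun x => x) P)
    (hint2 : Integrable (fun x => x^2) P)
    (hmean : ∫ x, x ∂P = μ)
    (hvar : ∫ x, (x - μ)^2 ∂P = σ^2) :
    P {x | γ ≤ x} ≠ ENNReal.ofReal (μ / γ) := by
  intro hmarkov
  have hγ : 0 < γ := hμ.trans_le hγ1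
  have hnonneg : 0 ≤ᵐ[P] fun x => x := by
    rw [Filter.EventuallyLE, ae_iff]
    simpa using hsupp
  have heq : γ * P.real {x | γ ≤ x} = ∫ x, x ∂P := by
    rw [measureReal_def, hmarkov, ENNReal.toReal_ofReal (by positivity), hmean,
      mul_div_cancel₀ _ hγ.ne']
  have hsecond : ∫ x, x ^ 2 ∂P = γ * μ := by
    rw [integral_sq_eq_mul_integral_of_mul_measureReal_eq_integral hnonneg measurable_id hint1 heq,
      hmean]
  have hmemLp : MemLp id 2 P := (memLp_two_iff_integrable_sq aestronglyMeasurable_id).mpr hint2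
  have hσ2 : σ ^ 2 = γ * μ - μ ^ 2 := by
    have hvar_eq := variance_eq_sub hmemLp
    rw [variance_eq_integral aemeasurable_id] at hvar_eq
    simp only [id, Pi.pow_apply, hmean, hsecond] at hvar_eq
    rw [← hvar, hvar_eq]
  have hγ_eq : γ = μ + σ ^ 2 / μ := by
    rw [hσ2]
    field_simp
    ring
  exact hγ2.ne hγ_eq

theorem stmt_1 (μ σ γ : ℝ) (hμ : 0 < μ) (hσ : 0 < σ)
    (hγ1 : μ ≤ γ) (hγ2 : γ < μ + σ^2 / μ)
    (P : Measure ℝ) (hP : IsProbabilityMeasure P)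
    (hsupp : P {x | x < 0} = 0)
    (hint1 : Integrable (fun x => x) P)
    (hint2 : Integrable (fun x => x^2) P)
    (hmean : ∫ x, x ∂P = μ)
    (hvar : ∫ x, (x - μ)^2 ∂P = σ^2) :
    P {x | γ ≤ x} ≠ ENNReal.ofReal (μ / γ) :=
  stmt_1_general μ σ γ hμ hγ1 hγ2 P hP hsupp hint1 hint2 hmean hvar
end

section
/- Let T ≥ 2, μ > 0, σ > 0 and −1/(T−1) < ρ < 1. There exists a probability distribution P on ℝ₊^T with mean vector μ𝟙 and second-moment matrix Σ + μ²𝟙𝟙ᵀ (where Σ = (1−ρ)σ²I + ρσ²𝟙𝟙ᵀ) if and only if μ² + ρσ² ≥ 0. -/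
/-!
Necessity: an off-diagonal second moment `μ² + ρσ²` is the expectation of a product of two
nonnegative coordinates. Sufficiency: write `v = (1 - ρ)σ²`, `m = ρσ² + μ²`, `c = v / T + m` and
`k = μ / c`. Put mass `k²v / T²` at each point `(T / k) eₜ`, mass `k²m` at `(1 / k) 𝟙` and the
remaining mass `1 - kμ` at the origin. The mean is `kc = μ` in every coordinate and the
second-moment matrix is `v I + m 𝟙𝟙ᵀ`; the leftover mass is nonnegative because
`c - μ² = σ²(1 + (T - 1)ρ) / T ≥ 0`.
-/

open MeasureTheory

noncomputable section

namespace MeasureTheory.Measure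

variable {ι X : Type*} [Fintype ι] [MeasurableSpace X]

def atomic (w : ι → ℝ) (x : ι → X) : Measure X :=
  ∑ i, ENNReal.ofReal (w i) • dirac (x i)

variable {w : ι → ℝ} {x : ι → X}

lemma isProbabilityMeasure_atomic (hw : ∀ i, 0 ≤ w i) (h1 : ∑ i, w i = 1) :
    IsProbabilityMeasure (atomic w x) := by
  constructor
  simp [atomic, ← ENNReal.ofReal_sum_of_nonneg fun i _ => hw i, h1]

lemma ae_atomic [MeasurableSingletonClass X] {p : X → Prop} (hp : ∀ i, p (x i)) :
    ∀ᵐ ξ ∂atomic w x, p ξ := by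
  rw [atomic, ← sum_fintype, ae_sum_iff]
  intro i
  exact ae_smul_measure (by simpa [ae_dirac_eq] using hp i) _

lemma integrable_smul_dirac [MeasurableSingletonClass X] (c : ℝ) (a : X) (f : X → ℝ) :
    Integrable f (ENNReal.ofReal c • dirac a) :=
  (integrable_dirac enorm_lt_top).smul_measure ENNReal.ofReal_ne_top

lemma integrable_atomic [MeasurableSingletonClass X] (f : X → ℝ) : Integrable f (atomic w x) :=
  integrable_finsetSum_measure.2 fun _ _ => integrable_smul_dirac _ _ f

lemma integral_atomic [MeasurableSingletonClass X] (hw : ∀ i, 0 ≤ w i) (f : X → ℝ) :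
    ∫ ξ, f ξ ∂atomic w x = ∑ i, w i * f (x i) := by
  rw [atomic, integral_finsetSum_measure fun _ _ => integrable_smul_dirac _ _ f]
  simp [ENNReal.toReal_ofReal (hw _)]

end MeasureTheory.Measure

section MomentConstruction

open Measure

variable {ι : Type*} {p q r α γ : ℝ}

def momentWeight (p q r : ℝ) : Option (Option ι) → ℝ
  | none => r
  | some none => q
  | some (some _) => p

lemma momentWeight_nonneg (hp : 0 ≤ p) (hq : 0 ≤ q) (hr : 0 ≤ r) :
    ∀ o : Option (Option ι), 0 ≤ momentWeight p q r o
  | none => hr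
  | some none => hq
  | some (some _) => hp

lemma sum_momentWeight [Fintype ι] :
    ∑ o, momentWeight (ι := ι) p q r o = Fintype.card ι * p + q + r := by
  simp only [momentWeight, Fintype.sum_option, Finset.sum_const, Finset.card_univ, nsmul_eq_mul]
  ring

variable [DecidableEq ι]

def momentAtom (α γ : ℝ) : Option (Option ι) → ι → ℝ
  | none => 0
  | some none => fun _ => γ
  | some (some i) => Pi.single i α

lemma momentAtom_nonneg (hα : 0 ≤ α) (hγ : 0 ≤ γ) :
    ∀ o : Option (Option ι), ∀ t, 0 ≤ momentAtom α γ o t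
  | none, _ => le_rfl
  | some none, _ => hγ
  | some (some i), t => by
    by_cases h : t = i <;> simp [momentAtom, h, hα]

variable [Fintype ι]

lemma integral_eval_atomic_momentAtom (hp : 0 ≤ p) (hq : 0 ≤ q) (hr : 0 ≤ r) (t : ι) :
    ∫ ξ, ξ t ∂atomic (momentWeight p q r) (momentAtom α γ) = p * α + q * γ := by
  rw [integral_atomic (momentWeight_nonneg hp hq hr)]
  simp only [momentWeight, momentAtom, Fintype.sum_option, Pi.zero_apply, mul_zero,
    Pi.single_apply, mul_ite, Finset.sum_ite_eq, Finset.mem_univ, ↓reduceIte, zero_add]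
  ring

lemma integral_eval_mul_eval_atomic_momentAtom (hp : 0 ≤ p) (hq : 0 ≤ q) (hr : 0 ≤ r) (s t : ι) :
    ∫ ξ, ξ s * ξ t ∂atomic (momentWeight p q r) (momentAtom α γ) =
      (if s = t then p * α ^ 2 else 0) + q * γ ^ 2 := by
  rw [integral_atomic (momentWeight_nonneg hp hq hr)]
  simp only [momentWeight, momentAtom, Fintype.sum_option, Pi.zero_apply, mul_zero,
    Pi.single_apply, mul_ite, ite_mul, zero_mul, Finset.sum_ite_eq, Finset.mem_univ, ↓reduceIte,
    zero_add]
  split_ifs <;> ring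

theorem exists_nonneg_measure_with_moments [Nonempty ι] {μ v m : ℝ} (hμ : 0 < μ) (hv : 0 ≤ v)
    (hm : 0 ≤ m) (hc : μ ^ 2 ≤ v / Fintype.card ι + m) :
    ∃ P : Measure (ι → ℝ), IsProbabilityMeasure P ∧ (∀ᵐ ξ ∂P, ∀ t, 0 ≤ ξ t) ∧
      (∀ f : (ι → ℝ) → ℝ, Integrable f P) ∧ (∀ t, ∫ ξ, ξ t ∂P = μ) ∧
      ∀ s t, ∫ ξ, ξ s * ξ t ∂P = (if s = t then v else 0) + m := by
  set n : ℝ := (Fintype.card ι : ℝ)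
  set c := v / n + m
  have hn : 0 < n := by positivity
  have hc0 : 0 < c := (pow_pos hμ 2).trans_le hc
  set k := μ / c
  have hk : 0 < k := div_pos hμ hc0
  have hkc : k * c = μ := div_mul_cancel₀ μ hc0.ne'
  have hkμ : k * μ ≤ 1 := by
    rw [div_mul_eq_mul_div, div_le_one hc0, ← sq]
    exact hc
  have hp : 0 ≤ k ^ 2 * v / n ^ 2 := by positivity
  have hq : 0 ≤ k ^ 2 * m := by positivity
  have hr : 0 ≤ 1 - k * μ := sub_nonneg.2 hkμ
  refine ⟨atomic (momentWeight _ _ _) (momentAtom (n / k) (1 / k)),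
    isProbabilityMeasure_atomic (momentWeight_nonneg hp hq hr) ?_,
    ae_atomic (momentAtom_nonneg (by positivity) (by positivity)), integrable_atomic,
    fun t => ?_, fun s t => ?_⟩
  · rw [sum_momentWeight, ← hkc]
    simp only [c, n]
    field_simp
    ring
  · rw [integral_eval_atomic_momentAtom hp hq hr, ← hkc]
    simp only [c]
    field_simp
  · rw [integral_eval_mul_eval_atomic_momentAtom hp hq hr]
    field_simp

end MomentConstruction

end

theorem stmt_3_general (T : ℕ) (hT : 2 ≤ T) (μ σ ρ : ℝ) (hμ : 0 < μ)
    (hρ1 : -(1 / ((T : ℝ) - 1)) < ρ) (hρ2 : ρ < 1) :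
    (∃ P : Measure (Fin T → ℝ), IsProbabilityMeasure P ∧
      (∀ᵐ ξ ∂P, ∀ t, 0 ≤ ξ t) ∧
      (∀ t, Integrable (fun ξ => ξ t) P) ∧
      (∀ s t, Integrable (fun ξ => ξ s * ξ t) P) ∧
      (∀ t, ∫ ξ, ξ t ∂P = μ) ∧
      (∀ s t : Fin T, ∫ ξ, ξ s * ξ t ∂P =
        (if s = t then (1 - ρ) * σ^2 else 0) + ρ * σ^2 + μ^2)) ↔
    0 ≤ μ^2 + ρ * σ^2 := by
  let i₀ : Fin T := ⟨0, by omega⟩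
  let i₁ : Fin T := ⟨1, by omega⟩
  constructor
  · rintro ⟨P, -, hpos, -, -, -, hsec⟩
    have hoff : ∫ ξ, ξ i₀ * ξ i₁ ∂P = ρ * σ ^ 2 + μ ^ 2 := by
      rw [hsec, if_neg (by simp [i₀, i₁, Fin.ext_iff]), zero_add]
    have hnonneg : 0 ≤ ∫ ξ, ξ i₀ * ξ i₁ ∂P :=
      integral_nonneg_of_ae (hpos.mono fun ξ hξ => mul_nonneg (hξ i₀) (hξ i₁))
    linarith
  · intro hm
    have hT0 : (0 : ℝ) < T := by positivity
    have hρT : 0 ≤ 1 + ρ * (T - 1) := by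
      have hT1 : (1 : ℝ) < T := by exact_mod_cast hT
      rw [← neg_div, div_lt_iff₀ (by linarith)] at hρ1
      linarith
    have hgap : μ ^ 2 ≤ (1 - ρ) * σ ^ 2 / Fintype.card (Fin T) + (ρ * σ ^ 2 + μ ^ 2) := by
      have : (1 - ρ) * σ ^ 2 / T + ρ * σ ^ 2 = σ ^ 2 * (1 + ρ * (T - 1)) / T := by
        field_simp
        ring
      rw [Fintype.card_fin]
      linarith [div_nonneg (mul_nonneg (sq_nonneg σ) hρT) hT0.le]
    have : Nonempty (Fin T) := ⟨i₀⟩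
    obtain ⟨P, hP, hpos, hint, hmean, hsec⟩ := exists_nonneg_measure_with_moments hμ
      (mul_nonneg (sub_nonneg.2 hρ2.le) (sq_nonneg σ)) (by linarith) hgap
    exact ⟨P, hP, hpos, fun _ => hint _, fun _ _ => hint _, hmean,
      fun s t => by rw [hsec, add_assoc]⟩

theorem stmt_3 (T : ℕ) (hT : 2 ≤ T) (μ σ ρ : ℝ) (hμ : 0 < μ) (hσ : 0 < σ)
    (hρ1 : -(1 / ((T : ℝ) - 1)) < ρ) (hρ2 : ρ < 1) :
    (∃ P : Measure (Fin T → ℝ), IsProbabilityMeasure P ∧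
      (∀ᵐ ξ ∂P, ∀ t, 0 ≤ ξ t) ∧
      (∀ t, Integrable (fun ξ => ξ t) P) ∧
      (∀ s t, Integrable (fun ξ => ξ s * ξ t) P) ∧
      (∀ t, ∫ ξ, ξ t ∂P = μ) ∧
      (∀ s t : Fin T, ∫ ξ, ξ s * ξ t ∂P =
        (if s = t then (1 - ρ) * σ^2 else 0) + ρ * σ^2 + μ^2)) ↔
    0 ≤ μ^2 + ρ * σ^2 :=
  stmt_3_general T hT μ σ ρ hμ hρ1 hρ2
end

section
/- Let T ≥ 2 and m₁, m₂ > 0. The feasible set { ξ ∈ ℝ₊^T : (1/T)Σₜ ξₜ = m₁, (1/T)Σₜ ξₜ² = m₂ } is non-empty if and only if 1 ≤ m₂/m₁² ≤ T. -/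
theorem stmt_6 (T : ℕ) (hT : 2 ≤ T) (m₁ m₂ : ℝ) (hm₁ : 0 < m₁) (hm₂ : 0 < m₂) :
    (∃ ξ : Fin T → ℝ, (∀ t, 0 ≤ ξ t) ∧
      (1 / (T : ℝ)) * ∑ t, ξ t = m₁ ∧ (1 / (T : ℝ)) * ∑ t, (ξ t)^2 = m₂) ↔
    (1 ≤ m₂ / m₁^2 ∧ m₂ / m₁^2 ≤ (T : ℝ)) := by
  have hn2 : (2:ℝ) ≤ (T:ℝ) := by exact_mod_cast hT
  have hn : (0:ℝ) < (T:ℝ) := by linarith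
  have he : (0:ℝ) < (T:ℝ) - 1 := by linarith
  constructor
  · rintro ⟨ξ, hpos, h1, h2⟩
    have hs1 : ∑ t, ξ t = (T:ℝ) * m₁ := by
      field_simp at h1; linarith
    have hs2 : ∑ t, (ξ t)^2 = (T:ℝ) * m₂ := by
      field_simp at h2; linarith
    have key1 : (∑ t, ξ t) ^ 2 ≤ (T:ℝ) * ∑ t, (ξ t)^2 := by
      have := sq_sum_le_card_mul_sum_sq (s := (Finset.univ : Finset (Fin T))) (f := ξ)
      simpa using this
    have key2 : ∑ t, (ξ t)^2 ≤ (∑ t, ξ t)^2 := by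
      calc ∑ t, (ξ t)^2 ≤ ∑ t, ξ t * (∑ s, ξ s) := by
            apply Finset.sum_le_sum
            intro t _
            have ht : ξ t ≤ ∑ s, ξ s :=
              Finset.single_le_sum (fun s _ => hpos s) (Finset.mem_univ t)
            have := hpos t
            nlinarith
        _ = (∑ t, ξ t)^2 := by rw [← Finset.sum_mul]; ring
    rw [hs1] at key1 key2
    rw [hs2] at key1 key2
    constructor
    · rw [le_div_iff₀ (by positivity), one_mul]
      nlinarith [mul_pos hn hn]
    · rw [div_le_iff₀ (by positivity)]
      nlinarith [mul_pos hn hn]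
  · rintro ⟨hlo, hhi⟩
    have hm12 : m₁^2 ≤ m₂ := by
      rw [le_div_iff₀ (by positivity), one_mul] at hlo; linarith
    have hm2T : m₂ ≤ (T:ℝ) * m₁^2 := by
      rw [div_le_iff₀ (by positivity)] at hhi; linarith
    set d : ℝ := Real.sqrt (((T:ℝ) - 1) * (m₂ - m₁^2)) with hd
    have hdnn : 0 ≤ d := Real.sqrt_nonneg _
    have hd2 : d^2 = ((T:ℝ) - 1) * (m₂ - m₁^2) := by
      rw [hd, Real.sq_sqrt]; nlinarith
    have hdle : d ≤ ((T:ℝ) - 1) * m₁ := by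
      have h1 : ((T:ℝ) - 1) * (m₂ - m₁^2) ≤ (((T:ℝ) - 1) * m₁)^2 := by nlinarith
      have h2 : d ≤ Real.sqrt ((((T:ℝ) - 1) * m₁)^2) := Real.sqrt_le_sqrt h1
      rwa [Real.sqrt_sq (by positivity)] at h2
    set A : ℝ := m₁ + d with hA
    set B : ℝ := m₁ - d / ((T:ℝ) - 1) with hB
    have hBnn : 0 ≤ B := by
      rw [hB, sub_nonneg, div_le_iff₀ he]; nlinarith
    have t0 : Fin T := ⟨0, by omega⟩
    refine ⟨fun t => if t = t0 then A else B, fun t => ?_, ?_, ?_⟩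
    · dsimp only; split_ifs
      · linarith
      · exact hBnn
    · have hsum : ∑ t : Fin T, (if t = t0 then A else B)
          = (T:ℝ) * B + (A - B) := by
        have : ∀ t : Fin T, (if t = t0 then A else B)
            = B + (if t = t0 then A - B else 0) := by
          intro t; split_ifs <;> ring
        simp_rw [this]
        rw [Finset.sum_add_distrib, Finset.sum_const, Finset.sum_ite_eq' Finset.univ t0]
        simp [mul_comm]
      rw [hsum]
      have : (T:ℝ) * B + (A - B) = (T:ℝ) * m₁ := by
        rw [hA, hB]; field_simp; ring
      rw [this]; field_simp
    · have hsum : ∑ t : Fin T, (if t = t0 then A else B)^2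
          = (T:ℝ) * B^2 + (A^2 - B^2) := by
        have : ∀ t : Fin T, (if t = t0 then A else B)^2
            = B^2 + (if t = t0 then A^2 - B^2 else 0) := by
          intro t; split_ifs <;> ring
        simp_rw [this]
        rw [Finset.sum_add_distrib, Finset.sum_const, Finset.sum_ite_eq' Finset.univ t0]
        simp [mul_comm]
      rw [hsum]
      have key : (T:ℝ) * B^2 + (A^2 - B^2) = (T:ℝ) * m₂ := by
        have hne : ((T:ℝ) - 1) ≠ 0 := ne_of_gt he
        rw [hA, hB]
        field_simp
        ring_nf
        nlinarith [hd2, sq_nonneg ((T:ℝ) - 1)]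
      rw [key]; field_simp
end

section
/- Let T ≥ 2 and m₁, m₂ > 0 with 1 ≤ m₂/m₁² ≤ T. The minimum of ∏ₜ ξₜ over { ξ ∈ ℝ₊^T : (1/T)Σₜ ξₜ = m₁, (1/T)Σₜ ξₜ² = m₂ } equals zero if and only if T/(T−1) ≤ m₂/m₁² ≤ T. -/
/-- Two-value construction: given `S ≥ 0` with `S² ≤ (m+1)·Q` and `Q ≤ S²`, there is a
nonnegative vector in `ℝ^(m+1)` with sum `S` and sum of squares `Q`. -/
lemma construct_aux (m : ℕ) (S Q : ℝ) (hS : 0 ≤ S) (h1 : S^2 ≤ ((m:ℝ)+1) * Q)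
    (h2 : Q ≤ S^2) :
    ∃ ξ : Fin (m+1) → ℝ, (∀ t, 0 ≤ ξ t) ∧ ∑ t, ξ t = S ∧ ∑ t, (ξ t)^2 = Q := by
  set c : ℝ := Real.sqrt ((((m:ℝ)+1)*Q - S^2)/m) with hc
  have hc0 : 0 ≤ c := Real.sqrt_nonneg _
  have key : (m:ℝ) * c^2 = ((m:ℝ)+1)*Q - S^2 := by
    rcases Nat.eq_zero_or_pos m with hm | hm
    · subst hm
      simp only [Nat.cast_zero, zero_mul, zero_add, one_mul] at h1 ⊢
      linarith
    · have hmR : (0:ℝ) < m := by exact_mod_cast hm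
      have hnum : 0 ≤ (((m:ℝ)+1)*Q - S^2) := by linarith
      have : c^2 = (((m:ℝ)+1)*Q - S^2)/m := Real.sq_sqrt (div_nonneg hnum hmR.le)
      rw [this]
      field_simp
  have hcS : c ≤ S := by
    rcases Nat.eq_zero_or_pos m with hm | hm
    · subst hm
      simp only [Nat.cast_zero, div_zero, Real.sqrt_zero] at hc
      linarith
    · have hmR : (0:ℝ) < m := by exact_mod_cast hm
      have hsq : c^2 ≤ S^2 := by nlinarith
      nlinarith
  have hm1 : (0:ℝ) < (m:ℝ)+1 := by positivity
  set a : ℝ := (S + m*c)/((m:ℝ)+1) with ha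
  set b : ℝ := (S - c)/((m:ℝ)+1) with hb
  have ha0 : 0 ≤ a := by
    apply div_nonneg _ hm1.le
    have : (0:ℝ) ≤ (m:ℝ)*c := mul_nonneg (Nat.cast_nonneg m) hc0
    linarith
  have hb0 : 0 ≤ b := div_nonneg (by linarith) hm1.le
  refine ⟨Fin.cons a (fun _ => b), ?_, ?_, ?_⟩
  · intro t
    refine Fin.cases ?_ ?_ t
    · simpa using ha0
    · intro i; simpa using hb0
  · rw [Fin.sum_cons]
    simp only [Finset.sum_const, Finset.card_univ, Fintype.card_fin, nsmul_eq_mul]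
    rw [ha, hb]
    field_simp
    ring
  · rw [Fin.sum_univ_succ]
    simp only [Fin.cons_zero, Fin.cons_succ, Finset.sum_const, Finset.card_univ,
      Fintype.card_fin, nsmul_eq_mul]
    rw [ha, hb]
    field_simp
    linear_combination (((m:ℝ)+1)) * key

theorem stmt_7 (T : ℕ) (hT : 2 ≤ T) (m₁ m₂ : ℝ) (hm₁ : 0 < m₁) (hm₂ : 0 < m₂)
    (hlo : 1 ≤ m₂ / m₁^2) (hhi : m₂ / m₁^2 ≤ (T : ℝ)) :
    sInf {y : ℝ | ∃ ξ : Fin T → ℝ, (∀ t, 0 ≤ ξ t) ∧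
        (1 / (T : ℝ)) * ∑ t, ξ t = m₁ ∧ (1 / (T : ℝ)) * ∑ t, (ξ t)^2 = m₂ ∧
        y = ∏ t, ξ t} = 0 ↔
    ((T : ℝ) / ((T : ℝ) - 1) ≤ m₂ / m₁^2 ∧ m₂ / m₁^2 ≤ (T : ℝ)) := by
  obtain ⟨k, rfl⟩ : ∃ k, T = k + 2 := ⟨T - 2, by omega⟩
  have hT2 : (2:ℝ) ≤ ((k+2 : ℕ) : ℝ) := by push_cast; linarith [Nat.cast_nonneg (α := ℝ) k]
  have hT0 : (0:ℝ) < ((k+2 : ℕ) : ℝ) := by linarith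
  have hTne : ((k+2 : ℕ) : ℝ) ≠ 0 := ne_of_gt hT0
  have hm12 : m₁^2 ≤ m₂ := (one_le_div (by positivity)).mp hlo
  have hupper : m₂ ≤ ((k+2 : ℕ) : ℝ) * m₁^2 := by
    have := (div_le_iff₀ (show (0:ℝ) < m₁^2 by positivity)).mp hhi
    linarith
  have hconv : ∀ s c : ℝ, ((1/((k+2 : ℕ) : ℝ)) * s = c ↔ s = ((k+2 : ℕ) : ℝ) * c) := by
    intro s c
    rw [one_div, inv_mul_eq_iff_eq_mul₀ hTne]
  set F : Set ℝ := {y : ℝ | ∃ ξ : Fin (k+2) → ℝ, (∀ t, 0 ≤ ξ t) ∧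
        (1 / ((k+2 : ℕ) : ℝ)) * ∑ t, ξ t = m₁ ∧ (1 / ((k+2 : ℕ) : ℝ)) * ∑ t, (ξ t)^2 = m₂ ∧
        y = ∏ t, ξ t} with hF
  set K : Set (Fin (k+2) → ℝ) := {ξ | (∀ t, 0 ≤ ξ t) ∧
      ∑ t, ξ t = ((k+2 : ℕ) : ℝ) * m₁ ∧ ∑ t, (ξ t)^2 = ((k+2 : ℕ) : ℝ) * m₂} with hK
  have himg : F = (fun ξ : Fin (k+2) → ℝ => ∏ t, ξ t) '' K := by
    ext y
    simp only [hF, hK, Set.mem_setOf_eq, Set.mem_image]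
    constructor
    · rintro ⟨ξ, h0, h1, h2, rfl⟩
      exact ⟨ξ, ⟨h0, (hconv _ _).mp h1, (hconv _ _).mp h2⟩, rfl⟩
    · rintro ⟨ξ, ⟨h0, h1, h2⟩, rfl⟩
      exact ⟨ξ, h0, (hconv _ _).mpr h1, (hconv _ _).mpr h2, rfl⟩
  -- K is compact
  have hKsub : K ⊆ Set.pi Set.univ (fun _ : Fin (k+2) => Set.Icc (0:ℝ) (((k+2 : ℕ) : ℝ)*m₁)) := by
    rintro ξ ⟨h0, h1, _⟩ t _
    refine ⟨h0 t, ?_⟩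
    calc ξ t ≤ ∑ s, ξ s := Finset.single_le_sum (fun i _ => h0 i) (Finset.mem_univ t)
      _ = ((k+2 : ℕ) : ℝ)*m₁ := h1
  have hKclosed : IsClosed K := by
    have c1 : IsClosed {ξ : Fin (k+2) → ℝ | ∀ t, 0 ≤ ξ t} := by
      have : {ξ : Fin (k+2) → ℝ | ∀ t, 0 ≤ ξ t} = ⋂ t, {ξ | 0 ≤ ξ t} := by ext; simp
      rw [this]
      exact isClosed_iInter fun t => isClosed_le continuous_const (continuous_apply t)
    have c2 : IsClosed {ξ : Fin (k+2) → ℝ | ∑ t, ξ t = ((k+2 : ℕ) : ℝ) * m₁} :=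
      isClosed_eq (continuous_finset_sum _ fun t _ => continuous_apply t) continuous_const
    have c3 : IsClosed {ξ : Fin (k+2) → ℝ | ∑ t, (ξ t)^2 = ((k+2 : ℕ) : ℝ) * m₂} :=
      isClosed_eq (continuous_finset_sum _ fun t _ => (continuous_apply t).pow 2)
        continuous_const
    have : K = {ξ : Fin (k+2) → ℝ | ∀ t, 0 ≤ ξ t} ∩
        ({ξ : Fin (k+2) → ℝ | ∑ t, ξ t = ((k+2 : ℕ) : ℝ) * m₁} ∩
         {ξ : Fin (k+2) → ℝ | ∑ t, (ξ t)^2 = ((k+2 : ℕ) : ℝ) * m₂}) := by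
      ext ξ; simp [hK, and_assoc]
    rw [this]
    exact c1.inter (c2.inter c3)
  have hKcompact : IsCompact K :=
    IsCompact.of_isClosed_subset (isCompact_univ_pi fun _ => isCompact_Icc) hKclosed hKsub
  -- K is nonempty
  have hKne : K.Nonempty := by
    obtain ⟨ξ, h0, h1, h2⟩ := construct_aux (k+1) (((k+2 : ℕ) : ℝ) * m₁) (((k+2 : ℕ) : ℝ) * m₂)
      (by positivity)
      (by push_cast
          nlinarith [mul_le_mul_of_nonneg_left hm12
            (show (0:ℝ) ≤ ((k:ℝ)+2)*((k:ℝ)+2) by positivity)])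
      (by push_cast at hupper ⊢
          nlinarith [mul_le_mul_of_nonneg_left hupper
            (show (0:ℝ) ≤ (k:ℝ)+2 by positivity)])
    exact ⟨ξ, h0, h1, h2⟩
  have hFne : F.Nonempty := by rw [himg]; exact hKne.image _
  have hFlb : ∀ y ∈ F, (0:ℝ) ≤ y := by
    rintro y ⟨ξ, h0, _, _, rfl⟩
    exact Finset.prod_nonneg fun t _ => h0 t
  constructor
  · intro h0inf
    refine ⟨?_, hhi⟩
    have hcont : Continuous (fun ξ : Fin (k+2) → ℝ => ∏ t, ξ t) :=
      continuous_finset_prod _ fun t _ => continuous_apply t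
    have hmem : sInf F ∈ F := by
      rw [himg]
      exact (hKcompact.image hcont).sInf_mem (by rw [← himg]; exact hFne)
    rw [h0inf] at hmem
    obtain ⟨ξ, hpos, hs1, hs2, hprod⟩ := hmem
    obtain ⟨t₀, -, ht₀⟩ := Finset.prod_eq_zero_iff.mp hprod.symm
    have hsum : ∑ t ∈ Finset.univ.erase t₀, ξ t = ((k+2 : ℕ) : ℝ)*m₁ := by
      rw [Finset.sum_erase _ ht₀]
      exact (hconv _ _).mp hs1
    have hsumsq : ∑ t ∈ Finset.univ.erase t₀, (ξ t)^2 = ((k+2 : ℕ) : ℝ)*m₂ := by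
      rw [Finset.sum_erase _ (by rw [ht₀]; ring)]
      exact (hconv _ _).mp hs2
    have hcs := sq_sum_le_card_mul_sum_sq (s := Finset.univ.erase t₀) (f := ξ)
    have hcard : (Finset.univ.erase t₀).card = k + 1 := by
      rw [Finset.card_erase_of_mem (Finset.mem_univ t₀), Finset.card_univ, Fintype.card_fin]
      omega
    rw [hcard, hsum, hsumsq] at hcs
    have hT1pos : (0:ℝ) < ((k+2 : ℕ) : ℝ) - 1 := by linarith
    rw [div_le_div_iff₀ hT1pos (by positivity)]
    push_cast at hcs hT0 ⊢
    nlinarith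
  · rintro ⟨hge, -⟩
    have hTm : ((k:ℝ) + 2) * m₁^2 ≤ ((k:ℝ) + 1) * m₂ := by
      rw [div_le_div_iff₀ (by push_cast at hT2 ⊢; linarith) (by positivity)] at hge
      push_cast at hge
      linarith
    obtain ⟨ξ', hpos', hs1', hs2'⟩ := construct_aux k (((k+2 : ℕ) : ℝ) * m₁)
      (((k+2 : ℕ) : ℝ) * m₂)
      (by positivity)
      (by push_cast
          nlinarith [mul_le_mul_of_nonneg_left hTm
            (show (0:ℝ) ≤ (k:ℝ)+2 by positivity)])
      (by push_cast at hupper ⊢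
          nlinarith [mul_le_mul_of_nonneg_left hupper
            (show (0:ℝ) ≤ (k:ℝ)+2 by positivity)])
    set ξ : Fin (k+2) → ℝ := Fin.cons 0 ξ' with hξ
    have h0mem : (0:ℝ) ∈ F := by
      refine ⟨ξ, ?_, ?_, ?_, ?_⟩
      · intro t
        refine Fin.cases ?_ ?_ t
        · simp [hξ]
        · intro i; simpa [hξ] using hpos' i
      · rw [(hconv _ _), hξ, Fin.sum_cons, hs1']; ring
      · rw [(hconv _ _), Fin.sum_univ_succ]
        simp only [hξ, Fin.cons_zero, Fin.cons_succ]
        rw [hs2']; ring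
      · exact (Finset.prod_eq_zero (Finset.mem_univ 0) (by simp [hξ])).symm
    refine le_antisymm ?_ (le_csInf hFne hFlb)
    exact csInf_le ⟨0, fun y hy => hFlb y hy⟩ h0mem
end

section
/- For T ≥ 2 and 0 < γ̄ < T^{−T}, any minimizer ξ* of ‖ξ‖₂² over { ξ ∈ ℝ₊^T : ‖ξ‖₁ = 1, ∏ₜ ξₜ ≤ γ̄ } satisfies ∏ₜ ξ*ₜ = γ̄. -/
theorem stmt_11 (T : ℕ) (hT : 2 ≤ T) (γ : ℝ) (h0 : 0 < γ) (h1 : γ < ((T : ℝ)^T)⁻¹)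
    (ξ : Fin T → ℝ) (hξ : ∀ t, 0 ≤ ξ t)
    (hsum : (∑ t, ξ t) = 1) (hprod : (∏ t, ξ t) ≤ γ)
    (hmin : ∀ η : Fin T → ℝ, (∀ t, 0 ≤ η t) → (∑ t, η t) = 1 → (∏ t, η t) ≤ γ →
      ∑ t, (ξ t)^2 ≤ ∑ t, (η t)^2) :
    (∏ t, ξ t) = γ := by
  by_contra hne
  have hlt : (∏ t, ξ t) < γ := lt_of_le_of_ne hprod hne
  have hTpos : (0:ℝ) < (T:ℝ) := by
    have : (0:ℕ) < T := by omega
    exact_mod_cast this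
  set u : ℝ := (T:ℝ)⁻¹ with hu
  have hupos : 0 < u := inv_pos.mpr hTpos
  have hTu : (T:ℝ) * u = 1 := mul_inv_cancel₀ (ne_of_gt hTpos)
  set S : ℝ := ∑ t, (ξ t)^2 with hS
  -- S - u = ∑ (ξ t - u)^2
  have hSu : S - u = ∑ t, (ξ t - u)^2 := by
    have h1' : ∑ t, (ξ t - u)^2 = ∑ t, ((ξ t)^2 - (2*u) * ξ t + u^2) :=
      Finset.sum_congr rfl (fun t _ => by ring)
    rw [h1']
    rw [Finset.sum_add_distrib, Finset.sum_sub_distrib, ← Finset.mul_sum, hsum,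
      Finset.sum_const, Finset.card_univ, Fintype.card_fin, nsmul_eq_mul]
    have : (T:ℝ) * u^2 = u := by
      rw [sq, ← mul_assoc, hTu, one_mul]
    rw [this]; ring
  -- ξ is not uniform, so S > u
  have hSgt : u < S := by
    rcases lt_or_eq_of_le (Finset.sum_nonneg (fun t _ => sq_nonneg (ξ t - u))) with h | h
    · linarith [hSu]
    · exfalso
      have hall : ∀ t ∈ Finset.univ, (ξ t - u)^2 = 0 := by
        intro t ht
        have := (Finset.sum_eq_zero_iff_of_nonneg
          (fun t _ => sq_nonneg (ξ t - u))).mp h.symm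
        exact this t ht
      have hxu : ∀ t, ξ t = u := by
        intro t
        have := hall t (Finset.mem_univ t)
        have := pow_eq_zero_iff (n := 2) (by norm_num) |>.mp this
        linarith
      have hp : (∏ t, ξ t) = ((T:ℝ)^T)⁻¹ := by
        simp only [hxu]
        rw [Finset.prod_const, Finset.card_univ, Fintype.card_fin, hu, inv_pow]
      linarith
  -- continuity of the mixed product
  have hf : Continuous fun ε : ℝ => ∏ t, ((1-ε) * ξ t + ε * u) := by
    apply continuous_finset_prod
    intro t _
    continuity
  have h0' : (fun ε : ℝ => ∏ t, ((1-ε) * ξ t + ε * u)) 0 < γ := by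
    simpa using hlt
  have hev : ∀ᶠ ε in nhds (0:ℝ), (∏ t, ((1-ε) * ξ t + ε * u)) < γ :=
    (hf.continuousAt).eventually_lt continuousAt_const h0'
  have hev' : ∀ᶠ ε in nhdsWithin (0:ℝ) (Set.Ioi 0),
      (∏ t, ((1-ε) * ξ t + ε * u)) < γ ∧ ε ∈ Set.Ioo (0:ℝ) 1 := by
    filter_upwards [hev.filter_mono nhdsWithin_le_nhds,
      Ioo_mem_nhdsGT_of_mem (by norm_num : (0:ℝ) ∈ Set.Ico 0 1)] with ε h1 h2
    exact ⟨h1, h2⟩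
  obtain ⟨ε, hεp, hεmem⟩ := hev'.exists
  obtain ⟨hε0, hε1⟩ := hεmem
  set η : Fin T → ℝ := fun t => (1-ε) * ξ t + ε * u with hη
  have hηnn : ∀ t, 0 ≤ η t := by
    intro t
    have : 0 ≤ (1-ε) * ξ t := mul_nonneg (by linarith) (hξ t)
    have : 0 ≤ ε * u := mul_nonneg (le_of_lt hε0) (le_of_lt hupos)
    simp only [hη]; nlinarith [mul_nonneg (by linarith : (0:ℝ) ≤ 1-ε) (hξ t)]
  have hηsum : (∑ t, η t) = 1 := by
    simp only [hη]
    rw [Finset.sum_add_distrib, ← Finset.mul_sum, hsum, Finset.sum_const,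
      Finset.card_univ, Fintype.card_fin, nsmul_eq_mul]
    have : (T:ℝ) * (ε * u) = ε := by
      rw [mul_comm ε u, ← mul_assoc, hTu, one_mul]
    rw [this]; ring
  have hηprod : (∏ t, η t) ≤ γ := le_of_lt hεp
  have hle := hmin η hηnn hηsum hηprod
  -- compute ∑ η^2
  have hexp : ∑ t, (η t)^2
      = (1-ε)^2 * S + (2*(1-ε)*ε*u) * (∑ t, ξ t) + (T:ℝ) * (ε^2 * u^2) := by
    have h1' : ∑ t, (η t)^2
        = ∑ t, ((1-ε)^2 * (ξ t)^2 + (2*(1-ε)*ε*u) * ξ t + ε^2 * u^2) :=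
      Finset.sum_congr rfl (fun t _ => by simp only [hη]; ring)
    rw [h1', Finset.sum_add_distrib, Finset.sum_add_distrib, ← Finset.mul_sum,
      ← Finset.mul_sum, Finset.sum_const, Finset.card_univ, Fintype.card_fin,
      nsmul_eq_mul, hS]
  have hTuu : (T:ℝ) * (ε^2 * u^2) = ε^2 * u := by
    have h' : (T:ℝ) * (ε^2 * u^2) = ε^2 * u * ((T:ℝ) * u) := by ring
    rw [h', hTu, mul_one]
  have hlt2 : ∑ t, (η t)^2 < S := by
    rw [hexp, hsum, hTuu]
    nlinarith [mul_pos hε0 (sub_pos.mpr hε1), hSgt]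
  linarith
end

section
/- Let T ≥ 2, μ > 0, σ > 0, −1/(T−1) < ρ < 1 with θ = 1 + (T−1)ρ, and fix γ ≥ (μ + σ²θ/(Tμ))^T. Set q* = σ²θ/(σ²θ + T(μ − γ^{1/T})²), p* = 1 − q*, v* = q*μ + σ√(θ q*(1−q*)/T), u* = μ − v*. Then the two-point distribution P* = p*·δ_{(u*/p*)𝟙} + q*·δ_{(v*/q*)𝟙} on ℝ₊^T satisfies E[ξ̃] = μ𝟙, E[ξ̃ξ̃ᵀ] ⪯ Σ + μ²𝟙𝟙ᵀ, and P*(∏ₜ ξ̃ₜ ≥ γ) = q*. -/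
/-!
`P*` is Cantelli's extremal two-point law for the average `ξ̄` of the coordinates, placed on the
diagonal `ℝ𝟙`. Put `s = σ²θ/T` (the variance of `ξ̄` under `Σ`), `g = γ^{1/T}`,
`q = s / (s + (g - μ)²)` and `a = (μ - q g)/(1 - q)`: the atoms `a < g` with weights `1 - q, q`
have mean `μ` and second moment `μ² + s`, and the lower bound on `γ` is exactly what makes `a ≥ 0`.
The second-moment matrix of a law on the diagonal is `(μ² + s) 𝟙𝟙ᵀ`, and since
`θ/T - ρ = (1 - ρ)/T`, subtracting it from `Σ + μ²𝟙𝟙ᵀ` leaves `(1 - ρ)σ² (I - 𝟙𝟙ᵀ/T) ⪰ 0`.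
Finally `∏ₜ ξₜ ≥ γ = g^T` holds on the atom `g𝟙` but not on `a𝟙`.
-/

open MeasureTheory

namespace MeasureTheory.Measure

variable {α : Type*} [MeasurableSpace α]

noncomputable def twoPoint (p q : ℝ) (x y : α) : Measure α :=
  ENNReal.ofReal p • dirac x + ENNReal.ofReal q • dirac y

lemma isProbabilityMeasure_twoPoint {p q : ℝ} (hp : 0 ≤ p) (hq : 0 ≤ q) (hpq : p + q = 1)
    (x y : α) : IsProbabilityMeasure (twoPoint p q x y) := by
  constructor
  simp [twoPoint, ← ENNReal.ofReal_add hp hq, hpq]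

lemma ae_twoPoint [MeasurableSingletonClass α] {P : α → Prop} {x y : α} (hx : P x) (hy : P y)
    (p q : ℝ) : ∀ᵐ a ∂twoPoint p q x y, P a := by
  rw [twoPoint, ae_add_measure_iff]
  exact ⟨ae_smul_measure (by rwa [ae_dirac_eq]) _, ae_smul_measure (by rwa [ae_dirac_eq]) _⟩

lemma integral_twoPoint [MeasurableSingletonClass α] {p q : ℝ} (hp : 0 ≤ p) (hq : 0 ≤ q)
    (x y : α) (f : α → ℝ) : ∫ a, f a ∂twoPoint p q x y = p * f x + q * f y := by
  rw [twoPoint, integral_add_measure, integral_smul_measure, integral_smul_measure,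
    integral_dirac, integral_dirac, ENNReal.toReal_ofReal hp, ENNReal.toReal_ofReal hq,
    smul_eq_mul, smul_eq_mul]
  · exact (integrable_dirac enorm_lt_top).smul_measure ENNReal.ofReal_ne_top
  · exact (integrable_dirac enorm_lt_top).smul_measure ENNReal.ofReal_ne_top

lemma twoPoint_apply_of_notMem_of_mem [MeasurableSingletonClass α] {s : Set α} {x y : α}
    (hx : x ∉ s) (hy : y ∈ s) (p q : ℝ) : twoPoint p q x y s = ENNReal.ofReal q := by
  simp [twoPoint, dirac_apply, hx, hy]

lemma twoPoint_setOf_pow_le_prod {T : ℕ} (hT : T ≠ 0) {a g : ℝ} (ha : 0 ≤ a) (hag : a < g)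
    (p q : ℝ) :
    twoPoint p q (fun _ : Fin T => a) (fun _ => g) {ξ | g ^ T ≤ ∏ t, ξ t} =
      ENNReal.ofReal q := by
  refine twoPoint_apply_of_notMem_of_mem ?_ ?_ _ _ <;>
    simp only [Set.mem_ofPred_eq, Finset.prod_const, Finset.card_univ, Fintype.card_fin, not_le]
  exacts [pow_lt_pow_left₀ hag ha hT, le_rfl]

end MeasureTheory.Measure

open Matrix in
lemma Matrix.posSemidef_smul_centering {ι : Type*} [Fintype ι] [DecidableEq ι] {k : ℝ}
    (hk : 0 ≤ k) :
    (of fun i j : ι => (if i = j then k else 0) - k / Fintype.card ι).PosSemidef := by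
  rw [posSemidef_iff_dotProduct_mulVec]
  refine ⟨?_, fun x => ?_⟩
  · ext i j
    simp [eq_comm]
  have hquad : star x ⬝ᵥ (of fun i j : ι => (if i = j then k else 0) - k / Fintype.card ι) *ᵥ x
      = k * ∑ i, x i ^ 2 - k / Fintype.card ι * (∑ i, x i) ^ 2 := by
    simp only [dotProduct, mulVec, of_apply, Pi.star_apply, star_trivial, sub_mul, ite_mul,
      zero_mul, Finset.sum_sub_distrib, Finset.sum_ite_eq, Finset.mem_univ, if_true,
      Finset.mul_sum, mul_sub, sq, Finset.sum_mul]
    congr 1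
    · exact Finset.sum_congr rfl fun i _ => by ring
    · exact Finset.sum_congr rfl fun i _ => Finset.sum_congr rfl fun j _ => by ring
  have hcs : (∑ i, x i) ^ 2 ≤ Fintype.card ι * ∑ i, x i ^ 2 := by
    simpa using sq_sum_le_card_mul_sum_sq (s := Finset.univ) (f := x)
  rw [hquad, sub_nonneg]
  rcases (Fintype.card ι).eq_zero_or_pos with h | h
  · simp only [h, Nat.cast_zero, div_zero, zero_mul]
    positivity
  · calc k / Fintype.card ι * (∑ i, x i) ^ 2
        ≤ k / Fintype.card ι * (Fintype.card ι * ∑ i, x i ^ 2) := by gcongr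
      _ = k * ∑ i, x i ^ 2 := by field_simp

lemma one_add_mul_pos_of_neg_one_div_lt {n ρ : ℝ} (hn : 0 < n) (hρ : -(1 / n) < ρ) :
    0 < 1 + n * ρ := by
  have := mul_lt_mul_of_pos_left hρ hn
  rw [mul_neg, mul_one_div_cancel hn.ne'] at this
  linarith

lemma le_rpow_one_div_of_pow_le {b γ : ℝ} {n : ℕ} (hb : 0 ≤ b) (hn : n ≠ 0) (h : b ^ n ≤ γ) :
    b ≤ γ ^ ((1 : ℝ) / n) := by
  rw [one_div, Real.le_rpow_inv_iff_of_pos hb ((pow_nonneg hb n).trans h) (by positivity),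
    Real.rpow_natCast]
  exact h

section Cantelli

variable {μ s g q : ℝ}

lemma cantelli_weight_pos_lt_one (hs : 0 < s) (hμg : μ < g) (hq : q = s / (s + (g - μ) ^ 2)) :
    0 < q ∧ q < 1 := by
  have hd : 0 < (g - μ) ^ 2 := by nlinarith
  subst hq
  exact ⟨by positivity, (div_lt_one (by positivity)).2 (by linarith)⟩

lemma sqrt_cantelli_variance (hs : 0 < s) (hμg : μ < g) (hq : q = s / (s + (g - μ) ^ 2)) :
    √(s * q * (1 - q)) = q * (g - μ) := by
  obtain ⟨hq0, -⟩ := cantelli_weight_pos_lt_one hs hμg hq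
  rw [Real.sqrt_eq_iff_mul_self_eq_of_pos (by nlinarith), hq]
  field_simp
  ring

lemma cantelli_weight_mul_le (hs : 0 < s) (hμ : 0 < μ) (hg : μ + s / μ ≤ g)
    (hq : q = s / (s + (g - μ) ^ 2)) : q * g ≤ μ := by
  have hsg : s ≤ μ * (g - μ) := by
    rw [← le_sub_iff_add_le', div_le_iff₀ hμ] at hg
    linarith
  have hμg : 0 ≤ g - μ := by nlinarith
  rw [hq, div_mul_eq_mul_div, div_le_iff₀ (by positivity)]
  linear_combination (g - μ) * hsg

lemma cantelli_second_moment (hs : 0 < s) (hμg : μ < g) (hq : q = s / (s + (g - μ) ^ 2)) :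
    (1 - q) * ((μ - q * g) / (1 - q)) ^ 2 + q * g ^ 2 = μ ^ 2 + s := by
  obtain ⟨hq0, hq1⟩ := cantelli_weight_pos_lt_one hs hμg hq
  have hqs : q * (g - μ) ^ 2 = (1 - q) * s := by
    rw [hq]
    field_simp
    ring
  have : 1 - q ≠ 0 := by linarith
  field_simp
  linear_combination hqs

lemma cantelli_atoms (hs : 0 < s) (hμ : 0 < μ) (hg : μ + s / μ ≤ g)
    (hq : q = s / (s + (g - μ) ^ 2)) {a : ℝ} (ha : a = (μ - q * g) / (1 - q)) :
    0 ≤ a ∧ a < g ∧ (1 - q) * a + q * g = μ ∧ (1 - q) * a ^ 2 + q * g ^ 2 = μ ^ 2 + s := by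
  have hμg : μ < g := lt_of_lt_of_le (lt_add_of_pos_right _ (by positivity)) hg
  obtain ⟨hq0, hq1⟩ := cantelli_weight_pos_lt_one hs hμg hq
  subst ha
  refine ⟨div_nonneg (sub_nonneg.2 (cantelli_weight_mul_le hs hμ hg hq)) (by linarith), ?_,
    by rw [mul_div_cancel₀ _ (by linarith)]; ring, cantelli_second_moment hs hμg hq⟩
  rw [div_lt_iff₀ (by linarith)]
  nlinarith

end Cantelli

lemma posSemidef_equicorrelated_sub_secondMoment {T : ℕ} (hT : T ≠ 0) {μ σ ρ θ : ℝ}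
    (hρ : ρ ≤ 1) (hθ : θ = 1 + ((T : ℝ) - 1) * ρ) (P : Measure (Fin T → ℝ))
    (hP : ∀ i j, ∫ ξ, ξ i * ξ j ∂P = μ ^ 2 + σ ^ 2 * θ / T) :
    Matrix.PosSemidef (Matrix.of fun s t : Fin T =>
      ((if s = t then (1 - ρ) * σ ^ 2 else 0) + ρ * σ ^ 2 + μ ^ 2) - ∫ ξ, ξ s * ξ t ∂P) := by
  convert Matrix.posSemidef_smul_centering (ι := Fin T) (k := (1 - ρ) * σ ^ 2) (by nlinarith)
    using 1
  ext i j
  rw [Matrix.of_apply, Matrix.of_apply, hP, Fintype.card_fin, hθ]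
  field_simp
  ring

theorem stmt_15 (T : ℕ) (hT : 2 ≤ T) (μ σ ρ γ : ℝ) (hμ : 0 < μ) (hσ : 0 < σ)
    (hρ1 : -(1 / ((T : ℝ) - 1)) < ρ) (hρ2 : ρ < 1)
    (θ : ℝ) (hθ : θ = 1 + ((T : ℝ) - 1) * ρ)
    (hγ : (μ + σ^2 * θ / ((T : ℝ) * μ))^T ≤ γ)
    (q p v u : ℝ)
    (hq : q = σ^2 * θ / (σ^2 * θ + (T : ℝ) * (μ - γ ^ ((1 : ℝ) / (T : ℝ)))^2))
    (hp : p = 1 - q)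
    (hv : v = q * μ + σ * Real.sqrt (θ * q * (1 - q) / (T : ℝ)))
    (hu : u = μ - v) :
    let P : Measure (Fin T → ℝ) :=
      ENNReal.ofReal p • Measure.dirac (fun _ => u / p) +
      ENNReal.ofReal q • Measure.dirac (fun _ => v / q)
    IsProbabilityMeasure P ∧
    (∀ᵐ ξ ∂P, ∀ t, 0 ≤ ξ t) ∧
    (∀ t, ∫ ξ, ξ t ∂P = μ) ∧
    Matrix.PosSemidef (Matrix.of fun s t : Fin T =>
      ((if s = t then (1 - ρ) * σ^2 else 0) + ρ * σ^2 + μ^2) - ∫ ξ, ξ s * ξ t ∂P) ∧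
    P {ξ | γ ≤ ∏ t, ξ t} = ENNReal.ofReal q := by
  intro P
  have hT2 : (2 : ℝ) ≤ T := by exact_mod_cast hT
  have hθ0 : 0 < θ := hθ ▸ one_add_mul_pos_of_neg_one_div_lt (by linarith) hρ1
  set s := σ ^ 2 * θ / T with hs
  have hs0 : 0 < s := by positivity
  set g := γ ^ ((1 : ℝ) / T) with hg
  have hμs : μ + s / μ ≤ g := by
    convert le_rpow_one_div_of_pow_le (by positivity) (by omega) hγ using 2
    rw [hs]
    field_simp
  have hμg : μ < g := lt_of_lt_of_le (lt_add_of_pos_right _ (by positivity)) hμs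
  have hq' : q = s / (s + (g - μ) ^ 2) := by
    rw [hq, hs]
    field_simp
    ring
  obtain ⟨hq0, hq1⟩ := cantelli_weight_pos_lt_one hs0 hμg hq'
  have hv' : v = q * g := by
    have hσθ : σ * √(θ * q * (1 - q) / T) = √(s * q * (1 - q)) := by
      rw [← Real.sqrt_sq hσ.le, ← Real.sqrt_mul (sq_nonneg σ), hs]
      ring_nf
    rw [hv, hσθ, sqrt_cantelli_variance hs0 hμg hq']
    ring
  obtain ⟨ha0, hag, hmean, hmoment⟩ := cantelli_atoms hs0 hμ hμs hq' rfl
  have hP : P = Measure.twoPoint (1 - q) q (fun _ => (μ - q * g) / (1 - q)) (fun _ => g) := by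
    simp only [P, Measure.twoPoint, hp, hu, hv', mul_div_cancel_left₀ _ hq0.ne']
  have hγg : γ = g ^ T := by
    rw [hg, one_div, Real.rpow_inv_natCast_pow ((pow_nonneg (by positivity) T).trans hγ) (by omega)]
  rw [hP, hγg]
  refine ⟨Measure.isProbabilityMeasure_twoPoint (by linarith) hq0.le (by ring) _ _,
    Measure.ae_twoPoint (fun _ => ha0) (fun _ => ha0.trans hag.le) _ _,
    fun t => by rwa [Measure.integral_twoPoint (by linarith) hq0.le],
    posSemidef_equicorrelated_sub_secondMoment (by omega) hρ2.le hθ _ fun i j => ?_,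
    Measure.twoPoint_setOf_pow_le_prod (by omega) ha0 hag _ _⟩
  rw [Measure.integral_twoPoint (by linarith) hq0.le, ← hs, ← hmoment]
  ring
end

section
/- Let T ≥ 2 and θ = 1 + (T−1)ρ > 0, μ > 0, σ > 0. For γ ≥ (μ + σ²θ/(Tμ))^T, the supremum over all probability distributions P on ℝ₊^T with E[ξ̃] = μ𝟙 and E[ξ̃ξ̃ᵀ] ⪯ Σ + μ²𝟙𝟙ᵀ of P(∏ₜ ξ̃ₜ ≥ γ) equals σ²θ/(σ²θ + T(μ − γ^{1/T})²); for μ^T < γ < (μ + σ²θ/(Tμ))^T it equals μγ^{−1/T}; and for 0 < γ ≤ μ^T it equals 1. -/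
/-!
Write `α = γ^(1/T)` and `S = ∑ₜ ξₜ`. By AM–GM, `∏ₜ ξₜ ≥ α^T` forces `S ≥ Tα`. Under every
admissible `P`, `S` has mean `Tμ`, and testing the semidefiniteness condition against `𝟙` gives
`E[S²] ≤ (Tμ)² + Tσ²θ`; Markov's and Cantelli's inequalities for `S` then give the bounds
`μ/α` and `σ²θ/(σ²θ + T(μ - α)²)`. Each bound is attained by a distribution on two points of the
diagonal: `μ𝟙` with probability one when `α ≤ μ`; `α𝟙` and `0` when `μ < α < μ + σ²θ/(Tμ)`;
otherwise `α𝟙` and `(μ - σ²θ/(T(α - μ)))𝟙`, the extremal pair of Cantelli's inequality.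
-/

open MeasureTheory ENNReal
open scoped Matrix

section TwoPoint

variable {α : Type*} [MeasurableSpace α] (p : ℝ) (a b : α)

noncomputable def twoPoint : Measure α :=
  ENNReal.ofReal p • Measure.dirac a + ENNReal.ofReal (1 - p) • Measure.dirac b

theorem isProbabilityMeasure_twoPoint (hp0 : 0 ≤ p) (hp1 : p ≤ 1) :
    IsProbabilityMeasure (twoPoint p a b) :=
  ⟨by simp [twoPoint, ← ENNReal.ofReal_add hp0 (sub_nonneg.2 hp1)]⟩

variable [MeasurableSingletonClass α]

theorem integrable_twoPoint (f : α → ℝ) : Integrable f (twoPoint p a b) :=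
  ((integrable_dirac enorm_lt_top).smul_measure ofReal_ne_top).add_measure
    ((integrable_dirac enorm_lt_top).smul_measure ofReal_ne_top)

theorem integral_twoPoint (hp0 : 0 ≤ p) (hp1 : p ≤ 1) (f : α → ℝ) :
    ∫ x, f x ∂twoPoint p a b = p * f a + (1 - p) * f b := by
  rw [twoPoint, integral_add_measure ((integrable_dirac enorm_lt_top).smul_measure ofReal_ne_top)
    ((integrable_dirac enorm_lt_top).smul_measure ofReal_ne_top), integral_smul_measure,
    integral_smul_measure, integral_dirac, integral_dirac, ENNReal.toReal_ofReal hp0,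
    ENNReal.toReal_ofReal (sub_nonneg.2 hp1), smul_eq_mul, smul_eq_mul]

theorem twoPoint_apply_of_mem_of_notMem {s : Set α} (ha : a ∈ s) (hb : b ∉ s) :
    twoPoint p a b s = ENNReal.ofReal p := by
  simp [twoPoint, Measure.dirac_apply, ha, hb]

theorem ae_twoPoint {q : α → Prop} (ha : q a) (hb : q b) : ∀ᵐ x ∂twoPoint p a b, q x := by
  rw [twoPoint, ae_add_measure_iff]
  refine ⟨Measure.ae_smul_measure ?_ _, Measure.ae_smul_measure ?_ _⟩ <;>
    rw [ae_dirac_eq] <;> assumption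

end TwoPoint

theorem Matrix.posSemidef_of_ite_add_const {ι : Type*} [Fintype ι] [DecidableEq ι] {a c : ℝ}
    (ha : 0 ≤ a) (hac : 0 ≤ a + Fintype.card ι * c) :
    (Matrix.of fun s t : ι => (if s = t then a else 0) + c).PosSemidef := by
  rw [Matrix.posSemidef_iff_dotProduct_mulVec]
  refine ⟨?_, fun x => ?_⟩
  · ext s t
    simp [eq_comm]
  · have hrow : ∀ s, ∑ t, ((if s = t then a else 0) + c) * x t = a * x s + c * ∑ t, x t := by
      intro s
      simp [add_mul, Finset.sum_add_distrib, ite_mul, Finset.mul_sum]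
    have hquad : star x ⬝ᵥ ((Matrix.of fun s t : ι => (if s = t then a else 0) + c) *ᵥ x)
        = a * ∑ t, x t ^ 2 + c * (∑ t, x t) ^ 2 := by
      simp only [dotProduct, Matrix.mulVec, Matrix.of_apply, star_trivial, hrow]
      calc ∑ s, x s * (a * x s + c * ∑ t, x t)
          = ∑ s, (a * x s ^ 2 + (c * ∑ t, x t) * x s) :=
            Finset.sum_congr rfl fun s _ => by ring
        _ = a * ∑ t, x t ^ 2 + c * (∑ t, x t) ^ 2 := by
            rw [Finset.sum_add_distrib, ← Finset.mul_sum, ← Finset.mul_sum]; ring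
    rw [hquad]
    rcases le_or_gt 0 c with hc | hc
    · positivity
    · have hcs : (∑ t, x t) ^ 2 ≤ Fintype.card ι * ∑ t, x t ^ 2 := by
        simpa using sq_sum_le_card_mul_sum_sq (s := Finset.univ) (f := x)
      nlinarith [Finset.sum_nonneg fun t (_ : t ∈ Finset.univ) => sq_nonneg (x t)]

theorem Real.card_mul_le_sum_of_pow_card_le_prod {ι : Type*} [Fintype ι] {α : ℝ} {ξ : ι → ℝ}
    (hα : 0 ≤ α) (hξ : ∀ t, 0 ≤ ξ t) (h : α ^ Fintype.card ι ≤ ∏ t, ξ t) :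
    Fintype.card ι * α ≤ ∑ t, ξ t := by
  set n := Fintype.card ι
  rcases Nat.eq_zero_or_pos n with hn | hn
  · simp [hn, Finset.sum_nonneg fun t _ => hξ t]
  have hn' : (0 : ℝ) < n := by exact_mod_cast hn
  have amgm := Real.geom_mean_le_arith_mean Finset.univ (fun _ => (1 : ℝ)) ξ
    (fun _ _ => zero_le_one) (by simpa using hn') (fun t _ => hξ t)
  simp only [Real.rpow_one, Finset.sum_const, Finset.card_univ, nsmul_eq_mul, mul_one,
    one_mul] at amgm
  have : α ≤ (∏ t, ξ t) ^ (n⁻¹ : ℝ) := by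
    calc α = (α ^ n) ^ (n⁻¹ : ℝ) := (Real.pow_rpow_inv_natCast hα hn.ne').symm
      _ ≤ _ := by gcongr
  rw [← le_div_iff₀' hn']
  exact this.trans amgm

section Tail

variable {Ω : Type*} [MeasurableSpace Ω] {P : Measure Ω} {f : Ω → ℝ}

theorem measure_ge_le_ofReal_integral_div [IsFiniteMeasure P] (hf0 : 0 ≤ᵐ[P] f)
    (hfi : Integrable f P) {ε : ℝ} (hε : 0 < ε) :
    P {x | ε ≤ f x} ≤ ENNReal.ofReal ((∫ x, f x ∂P) / ε) := by
  rw [← ofReal_measureReal (measure_ne_top _ _)]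
  exact ENNReal.ofReal_le_ofReal <|
    (le_div_iff₀' hε).2 (mul_meas_ge_le_integral_of_nonneg hf0 hfi ε)

theorem measure_add_le_le_div_add_sq [IsProbabilityMeasure P] (hfi : Integrable f P)
    (hf2 : Integrable (fun x => f x ^ 2) P) {m v a : ℝ} (hm : ∫ x, f x ∂P = m)
    (hv : ∫ x, f x ^ 2 ∂P ≤ m ^ 2 + v) (hv0 : 0 < v) (ha : 0 < a) :
    P {x | m + a ≤ f x} ≤ ENNReal.ofReal (v / (v + a ^ 2)) := by
  -- Cantelli: Markov's inequality for `(f - m + λ)²`, with the optimal shift `λ = v / a`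
  set lam := v / a
  have hlam : 0 < lam := div_pos hv0 ha
  have hg : (fun x => (f x - m + lam) ^ 2)
      = fun x => f x ^ 2 + 2 * (lam - m) * f x + (lam - m) ^ 2 := by
    funext x; ring
  have hi : Integrable (fun x => f x ^ 2 + 2 * (lam - m) * f x) P := hf2.add (hfi.const_mul _)
  have hgi : Integrable (fun x => (f x - m + lam) ^ 2) P := by
    rw [hg]; exact hi.add (integrable_const _)
  have hgint : ∫ x, (f x - m + lam) ^ 2 ∂P ≤ v + lam ^ 2 := by
    rw [hg, integral_add hi (integrable_const _), integral_add hf2 (hfi.const_mul _),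
      integral_const_mul, hm]
    simp only [integral_const, probReal_univ, one_smul]
    nlinarith
  have hsub : {x | m + a ≤ f x} ⊆ {x | (a + lam) ^ 2 ≤ (f x - m + lam) ^ 2} := fun x hx =>
    pow_le_pow_left₀ (by positivity : 0 ≤ a + lam) (by linarith [show m + a ≤ f x from hx]) 2
  have hval : (v + lam ^ 2) / (a + lam) ^ 2 = v / (v + a ^ 2) := by
    simp only [lam]; field_simp; ring
  calc P {x | m + a ≤ f x}
      ≤ ENNReal.ofReal ((∫ x, (f x - m + lam) ^ 2 ∂P) / (a + lam) ^ 2) :=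
        (measure_mono hsub).trans (measure_ge_le_ofReal_integral_div
          (ae_of_all _ fun x => sq_nonneg _) hgi (by positivity))
    _ ≤ ENNReal.ofReal (v / (v + a ^ 2)) := by
        rw [← hval]; gcongr

end Tail

section Moments

variable {ι : Type*} [Fintype ι] {P : Measure (ι → ℝ)}

theorem integrable_sum_sq (hi2 : ∀ s t, Integrable (fun ξ => ξ s * ξ t) P) :
    Integrable (fun ξ => (∑ t, ξ t) ^ 2) P := by
  simp only [sq, Finset.sum_mul_sum]
  exact integrable_finsetSum _ fun s _ => integrable_finsetSum _ fun t _ => hi2 s t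

theorem integral_sum_sq (hi2 : ∀ s t, Integrable (fun ξ => ξ s * ξ t) P) :
    ∫ ξ, (∑ t, ξ t) ^ 2 ∂P = ∑ s, ∑ t, ∫ ξ, ξ s * ξ t ∂P := by
  simp only [sq, Finset.sum_mul_sum]
  rw [integral_finsetSum _ fun s _ => integrable_finsetSum _ fun t _ => hi2 s t]
  exact Finset.sum_congr rfl fun s _ => integral_finsetSum _ fun t _ => hi2 s t

theorem integral_sum_sq_le_of_posSemidef {M : Matrix ι ι ℝ}
    (hi2 : ∀ s t, Integrable (fun ξ => ξ s * ξ t) P)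
    (hM : (Matrix.of fun s t => M s t - ∫ ξ, ξ s * ξ t ∂P).PosSemidef) :
    ∫ ξ, (∑ t, ξ t) ^ 2 ∂P ≤ ∑ s, ∑ t, M s t := by
  have h := hM.dotProduct_mulVec_nonneg 1
  simp only [dotProduct, Matrix.mulVec, star_trivial, Pi.one_apply, one_mul, mul_one,
    Matrix.of_apply, Finset.sum_sub_distrib, sub_nonneg] at h
  rwa [integral_sum_sq hi2]

end Moments

section ProductTail

variable {ι : Type*} [Fintype ι] {P : Measure (ι → ℝ)} {μ α : ℝ}

theorem measure_pow_card_le_prod_le (h0 : ∀ᵐ ξ ∂P, ∀ t, 0 ≤ ξ t) (hα : 0 ≤ α) :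
    P {ξ | α ^ Fintype.card ι ≤ ∏ t, ξ t} ≤ P {ξ | Fintype.card ι * α ≤ ∑ t, ξ t} :=
  measure_mono_ae (h0.mono fun _ hξ h => Real.card_mul_le_sum_of_pow_card_le_prod hα hξ h)

theorem integral_sum_eq_card_mul (hi : ∀ t, Integrable (fun ξ => ξ t) P)
    (hmean : ∀ t, ∫ ξ, ξ t ∂P = μ) : ∫ ξ, ∑ t, ξ t ∂P = Fintype.card ι * μ := by
  simp [integral_finsetSum _ fun t _ => hi t, hmean]

variable [IsProbabilityMeasure P] [Nonempty ι]

theorem measure_pow_card_le_prod_le_div (h0 : ∀ᵐ ξ ∂P, ∀ t, 0 ≤ ξ t)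
    (hi : ∀ t, Integrable (fun ξ => ξ t) P) (hmean : ∀ t, ∫ ξ, ξ t ∂P = μ) (hα : 0 < α) :
    P {ξ | α ^ Fintype.card ι ≤ ∏ t, ξ t} ≤ ENNReal.ofReal (μ / α) := by
  have hn : (0 : ℝ) < Fintype.card ι := by exact_mod_cast Fintype.card_pos
  calc P {ξ | α ^ Fintype.card ι ≤ ∏ t, ξ t}
      ≤ P {ξ | Fintype.card ι * α ≤ ∑ t, ξ t} := measure_pow_card_le_prod_le h0 hα.le
    _ ≤ ENNReal.ofReal ((∫ ξ, ∑ t, ξ t ∂P) / (Fintype.card ι * α)) :=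
        measure_ge_le_ofReal_integral_div
          (h0.mono fun _ hξ => Finset.sum_nonneg fun t _ => hξ t)
          (integrable_finsetSum _ fun t _ => hi t) (by positivity)
    _ = ENNReal.ofReal (μ / α) := by
        rw [integral_sum_eq_card_mul hi hmean, mul_div_mul_left _ _ hn.ne']

theorem measure_pow_card_le_prod_le_div_add_sq (h0 : ∀ᵐ ξ ∂P, ∀ t, 0 ≤ ξ t)
    (hi : ∀ t, Integrable (fun ξ => ξ t) P) (hi2 : ∀ s t, Integrable (fun ξ => ξ s * ξ t) P)
    (hmean : ∀ t, ∫ ξ, ξ t ∂P = μ) {v : ℝ}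
    (hsq : ∫ ξ, (∑ t, ξ t) ^ 2 ∂P ≤ (Fintype.card ι * μ) ^ 2 + Fintype.card ι * v)
    (hv : 0 < v) (hμα : μ < α) :
    P {ξ | α ^ Fintype.card ι ≤ ∏ t, ξ t} ≤
      ENNReal.ofReal (v / (v + Fintype.card ι * (μ - α) ^ 2)) := by
  set n : ℝ := (Fintype.card ι : ℝ)
  have hn : 0 < n := Nat.cast_pos.2 Fintype.card_pos
  have hμ : 0 ≤ μ :=
    hmean (Classical.arbitrary ι) ▸ integral_nonneg_of_ae (h0.mono fun _ hξ => hξ _)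
  have hcantelli := measure_add_le_le_div_add_sq (integrable_finsetSum _ fun t _ => hi t)
    (integrable_sum_sq hi2) (integral_sum_eq_card_mul hi hmean) hsq (by positivity)
    (by nlinarith : 0 < n * (α - μ))
  rw [show n * μ + n * (α - μ) = n * α by ring] at hcantelli
  calc P {ξ | α ^ Fintype.card ι ≤ ∏ t, ξ t}
      ≤ P {ξ | n * α ≤ ∑ t, ξ t} := measure_pow_card_le_prod_le h0 (by linarith)
    _ ≤ _ := hcantelli
    _ = ENNReal.ofReal (v / (v + n * (μ - α) ^ 2)) := by
        congr 1; field_simp; ring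

end ProductTail

def productTailProbs (T : ℕ) (μ σ ρ γ : ℝ) : Set ℝ≥0∞ :=
  {r : ℝ≥0∞ | ∃ P : Measure (Fin T → ℝ), IsProbabilityMeasure P ∧
    (∀ᵐ ξ ∂P, ∀ t, 0 ≤ ξ t) ∧
    (∀ t, Integrable (fun ξ => ξ t) P) ∧
    (∀ s t, Integrable (fun ξ => ξ s * ξ t) P) ∧
    (∀ t, ∫ ξ, ξ t ∂P = μ) ∧
    Matrix.PosSemidef (Matrix.of fun s t : Fin T =>
      ((if s = t then (1 - ρ) * σ^2 else 0) + ρ * σ^2 + μ^2) - ∫ ξ, ξ s * ξ t ∂P) ∧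
    r = P {ξ | γ ≤ ∏ t, ξ t}}

section ProductTailProbs

variable {T : ℕ} {μ σ ρ θ α : ℝ} {r : ℝ≥0∞}

theorem le_of_mem_productTailProbs (hT : T ≠ 0) (hθ : θ = 1 + ((T : ℝ) - 1) * ρ) (hα : 0 < α)
    (hr : r ∈ productTailProbs T μ σ ρ (α ^ T)) :
    r ≤ ENNReal.ofReal (μ / α) ∧
      (0 < σ ^ 2 * θ → μ < α →
        r ≤ ENNReal.ofReal (σ ^ 2 * θ / (σ ^ 2 * θ + T * (μ - α) ^ 2))) := by
  obtain ⟨P, hP, h0, hi, hi2, hmean, hpsd, rfl⟩ := hr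
  have : Nonempty (Fin T) := Fin.pos_iff_nonempty.1 (Nat.pos_of_ne_zero hT)
  have hsq : ∫ ξ, (∑ t, ξ t) ^ 2 ∂P ≤ (T * μ) ^ 2 + T * (σ ^ 2 * θ) := by
    refine (integral_sum_sq_le_of_posSemidef hi2 hpsd).trans_eq ?_
    simp only [Finset.sum_add_distrib, Finset.sum_ite_eq, Finset.mem_univ, if_true,
      Finset.sum_const, Finset.card_univ, Fintype.card_fin, nsmul_eq_mul, hθ]
    ring
  refine ⟨by simpa only [Fintype.card_fin] using measure_pow_card_le_prod_le_div h0 hi hmean hα,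
    fun hv hμα => ?_⟩
  simpa only [Fintype.card_fin] using measure_pow_card_le_prod_le_div_add_sq h0 hi hi2 hmean
    (by rwa [Fintype.card_fin]) hv hμα

theorem ofReal_mem_productTailProbs {γ x y p : ℝ} (hρ : ρ < 1) (hθ : θ = 1 + ((T : ℝ) - 1) * ρ)
    (hx : 0 ≤ x) (hy : 0 ≤ y) (hp0 : 0 ≤ p) (hp1 : p ≤ 1) (hmean : p * x + (1 - p) * y = μ)
    (hsq : T * (p * x ^ 2 + (1 - p) * y ^ 2) ≤ T * μ ^ 2 + σ ^ 2 * θ)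
    (hxγ : γ ≤ x ^ T) (hyγ : y ^ T < γ) :
    ENNReal.ofReal p ∈ productTailProbs T μ σ ρ γ := by
  have := isProbabilityMeasure_twoPoint p (fun _ : Fin T => x) (fun _ => y) hp0 hp1
  refine ⟨twoPoint p (fun _ => x) (fun _ => y), this,
    ae_twoPoint _ _ _ (fun _ => hx) (fun _ => hy),
    fun t => integrable_twoPoint _ _ _ _, fun s t => integrable_twoPoint _ _ _ _,
    fun t => by rw [integral_twoPoint _ _ _ hp0 hp1, hmean], ?_,
    (twoPoint_apply_of_mem_of_notMem _ _ _ ?_ ?_).symm⟩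
  · convert Matrix.posSemidef_of_ite_add_const (ι := Fin T) (a := (1 - ρ) * σ ^ 2)
      (c := ρ * σ ^ 2 + μ ^ 2 - (p * x ^ 2 + (1 - p) * y ^ 2)) (by nlinarith [sq_nonneg σ])
      (by rw [Fintype.card_fin]; nlinarith) using 1
    ext s t
    simp only [Matrix.of_apply, integral_twoPoint _ _ _ hp0 hp1]
    ring
  · simpa using hxγ
  · simpa using hyγ

theorem sSup_productTailProbs_pow_of_le (hT : T ≠ 0) (hμ : 0 < μ) (hρ : ρ < 1)
    (hθ : θ = 1 + ((T : ℝ) - 1) * ρ) (hv : 0 < σ ^ 2 * θ) (hα : 0 < α) (hαμ : α ≤ μ) :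
    sSup (productTailProbs T μ σ ρ (α ^ T)) = 1 := by
  refine IsGreatest.csSup_eq ⟨?_, ?_⟩
  · simpa using ofReal_mem_productTailProbs (x := μ) (y := 0) (p := 1) hρ hθ hμ.le le_rfl
      zero_le_one le_rfl (by ring) (by nlinarith) (pow_le_pow_left₀ hα.le hαμ T)
      (by rw [zero_pow hT]; positivity)
  · rintro r ⟨P, hP, -, -, -, -, -, rfl⟩
    exact prob_le_one

theorem sSup_productTailProbs_pow_of_lt_of_lt (hT : T ≠ 0) (hμ : 0 < μ) (hρ : ρ < 1)
    (hθ : θ = 1 + ((T : ℝ) - 1) * ρ) (hμα : μ < α)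
    (hαc : α < μ + σ ^ 2 * θ / (T * μ)) :
    sSup (productTailProbs T μ σ ρ (α ^ T)) = ENNReal.ofReal (μ / α) := by
  have hα : 0 < α := hμ.trans hμα
  have hT' : (0 : ℝ) < T := Nat.cast_pos.2 (Nat.pos_of_ne_zero hT)
  refine IsGreatest.csSup_eq ⟨?_, fun r hr => (le_of_mem_productTailProbs hT hθ hα hr).1⟩
  refine ofReal_mem_productTailProbs (x := α) (y := 0) hρ hθ hα.le le_rfl (by positivity)
    ((div_le_one hα).2 hμα.le) (by field_simp; ring) ?_ le_rfl (by rw [zero_pow hT]; positivity)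
  have : T * μ * (α - μ) < σ ^ 2 * θ := (lt_div_iff₀' (by positivity)).1 (by linarith)
  field_simp
  nlinarith

theorem sSup_productTailProbs_pow_of_add_div_le (hT : T ≠ 0) (hμ : 0 < μ) (hρ : ρ < 1)
    (hθ : θ = 1 + ((T : ℝ) - 1) * ρ) (hv : 0 < σ ^ 2 * θ) (hcα : μ + σ ^ 2 * θ / (T * μ) ≤ α) :
    sSup (productTailProbs T μ σ ρ (α ^ T)) =
      ENNReal.ofReal (σ ^ 2 * θ / (σ ^ 2 * θ + T * (μ - α) ^ 2)) := by
  set w := σ ^ 2 * θ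
  have hT' : (0 : ℝ) < T := Nat.cast_pos.2 (Nat.pos_of_ne_zero hT)
  have hμα : μ < α := lt_of_lt_of_le (lt_add_of_pos_right μ (by positivity)) hcα
  have hα : 0 < α := hμ.trans hμα
  refine IsGreatest.csSup_eq ⟨?_, fun r hr => (le_of_mem_productTailProbs hT hθ hα hr).2 hv hμα⟩
  set y := μ - w / (T * (α - μ))
  set p := w / (w + T * (μ - α) ^ 2)
  have hd : 0 < α - μ := sub_pos.2 hμα
  have hy : 0 ≤ y := by
    have : w / (T * μ) ≤ α - μ := by linarith
    rw [div_le_iff₀ (by positivity)] at this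
    rw [sub_nonneg, div_le_iff₀ (by positivity)]
    linarith
  have hyα : y < α := by
    have : 0 < w / (T * (α - μ)) := by positivity
    linarith
  have hmean : p * α + (1 - p) * y = μ := by
    simp only [p, y]; field_simp; ring
  have hsq : T * (p * α ^ 2 + (1 - p) * y ^ 2) = T * μ ^ 2 + w := by
    simp only [p, y]; field_simp; ring
  exact ofReal_mem_productTailProbs hρ hθ hα.le hy (by positivity)
    (div_le_one_of_le₀ (by nlinarith) (by positivity)) hmean hsq.le le_rfl
    (pow_lt_pow_left₀ hyα hy hT)

end ProductTailProbs

theorem stmt_16_general (T : ℕ) (hT : 2 ≤ T) (μ σ ρ : ℝ) (hμ : 0 < μ) (hσ : 0 < σ)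
    (hρ1 : -(1 / ((T : ℝ) - 1)) < ρ) (hρ2 : ρ < 1)
    (θ : ℝ) (hθ : θ = 1 + ((T : ℝ) - 1) * ρ) (γ : ℝ) (hγ : 0 < γ) :
    sSup {r : ℝ≥0∞ | ∃ P : Measure (Fin T → ℝ), IsProbabilityMeasure P ∧
        (∀ᵐ ξ ∂P, ∀ t, 0 ≤ ξ t) ∧
        (∀ t, Integrable (fun ξ => ξ t) P) ∧
        (∀ s t, Integrable (fun ξ => ξ s * ξ t) P) ∧
        (∀ t, ∫ ξ, ξ t ∂P = μ) ∧
        Matrix.PosSemidef (Matrix.of fun s t : Fin T =>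
          ((if s = t then (1 - ρ) * σ^2 else 0) + ρ * σ^2 + μ^2) - ∫ ξ, ξ s * ξ t ∂P) ∧
        r = P {ξ | γ ≤ ∏ t, ξ t}} =
      (if γ ≤ μ^T then 1
       else if γ < (μ + σ^2 * θ / ((T : ℝ) * μ))^T then
         ENNReal.ofReal (μ * (γ ^ ((1 : ℝ) / (T : ℝ)))⁻¹)
       else
         ENNReal.ofReal (σ^2 * θ / (σ^2 * θ + (T : ℝ) * (μ - γ ^ ((1 : ℝ) / (T : ℝ)))^2))) := by
  have hT0 : T ≠ 0 := by omega
  have hθ0 : 0 < θ := by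
    have hT1 : (0 : ℝ) < T - 1 := by
      have : (2 : ℝ) ≤ T := by exact_mod_cast hT
      linarith
    rw [← neg_div, div_lt_iff₀' hT1] at hρ1
    rw [hθ]; linarith
  have hv : 0 < σ ^ 2 * θ := by positivity
  obtain ⟨α, hα, rfl⟩ : ∃ α : ℝ, 0 < α ∧ α ^ T = γ :=
    ⟨γ ^ ((T : ℝ)⁻¹), by positivity, Real.rpow_inv_natCast_pow hγ.le hT0⟩
  change sSup (productTailProbs T μ σ ρ (α ^ T)) = _
  simp only [one_div, Real.pow_rpow_inv_natCast hα.le hT0, ← div_eq_mul_inv,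
    pow_le_pow_iff_left₀ hα.le hμ.le hT0,
    pow_lt_pow_iff_left₀ hα.le (by positivity : 0 ≤ μ + σ ^ 2 * θ / (T * μ)) hT0]
  split_ifs with hαμ hαc
  · exact sSup_productTailProbs_pow_of_le hT0 hμ hρ2 hθ hv hα hαμ
  · exact sSup_productTailProbs_pow_of_lt_of_lt hT0 hμ hρ2 hθ (not_le.1 hαμ) hαc
  · exact sSup_productTailProbs_pow_of_add_div_le hT0 hμ hρ2 hθ hv (not_lt.1 hαc)

theorem stmt_16 (T : ℕ) (hT : 2 ≤ T) (μ σ ρ : ℝ) (hμ : 0 < μ) (hσ : 0 < σ)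
    (hρ1 : -(1 / ((T : ℝ) - 1)) < ρ) (hρ2 : ρ < 1)
    (hslater : 0 < μ^2 + ρ * σ^2)
    (θ : ℝ) (hθ : θ = 1 + ((T : ℝ) - 1) * ρ) (γ : ℝ) (hγ : 0 < γ) :
    sSup {r : ℝ≥0∞ | ∃ P : Measure (Fin T → ℝ), IsProbabilityMeasure P ∧
        (∀ᵐ ξ ∂P, ∀ t, 0 ≤ ξ t) ∧
        (∀ t, Integrable (fun ξ => ξ t) P) ∧
        (∀ s t, Integrable (fun ξ => ξ s * ξ t) P) ∧
        (∀ t, ∫ ξ, ξ t ∂P = μ) ∧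
        Matrix.PosSemidef (Matrix.of fun s t : Fin T =>
          ((if s = t then (1 - ρ) * σ^2 else 0) + ρ * σ^2 + μ^2) - ∫ ξ, ξ s * ξ t ∂P) ∧
        r = P {ξ | γ ≤ ∏ t, ξ t}} =
      (if γ ≤ μ^T then 1
       else if γ < (μ + σ^2 * θ / ((T : ℝ) * μ))^T then
         ENNReal.ofReal (μ * (γ ^ ((1 : ℝ) / (T : ℝ)))⁻¹)
       else
         ENNReal.ofReal (σ^2 * θ / (σ^2 * θ + (T : ℝ) * (μ - γ ^ ((1 : ℝ) / (T : ℝ)))^2))) :=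
  stmt_16_general T hT μ σ ρ hμ hσ hρ1 hρ2 θ hθ γ hγ
end
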